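/- The eventual-equality relation E_0 on Cantor space is not smooth: there is no Borel measurable function f : 2^ℕ → ℝ such that x E_0 y ↔ f(x) = f(y) for all x, y. -/

import Mathlib

/-!
Under the fair coin-tossing measure, an `E₀`-invariant Borel set is a tail event, so it has
measure `0` or `1` by Kolmogorov's zero–one law. A Borel reduction `f` of `E₀` to equality of
reals therefore pulls every Borel set back to a null or a conull set, and since the Borel sets of
`ℝ` are countably separated, `f` is a.e. constant. But each fibre of `f` is a single `E₀`-class,
which is countable and hence null, the measure having no atoms.
-/

/-- Eventual equality on Cantor space. -/
def E0 (x y : ℕ → Bool) : Prop := ∃ n : ℕ, ∀ m ≥ n, x m = y m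

open MeasureTheory ProbabilityTheory Filter Set unitInterval
open scoped ENNReal

namespace MeasureTheory

variable {X : ℕ → Type*} [mX : ∀ i, MeasurableSpace (X i)]

theorem measurableSet_limsup_comap_eval_of_eventuallyEq_invariant {A : Set (∀ i, X i)}
    (hA : MeasurableSet A)
    (hinv : ∀ x y : ∀ i, X i, (∀ᶠ i in atTop, x i = y i) → x ∈ A → y ∈ A) :
    MeasurableSet[limsup (fun i ↦ (mX i).comap fun x : ∀ j, X j ↦ x i) atTop] A := by
  rcases isEmpty_or_nonempty (∀ i, X i) with _ | ⟨⟨z⟩⟩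
  · rw [Set.eq_empty_of_isEmpty A]
    exact MeasurableSpace.measurableSet_empty _
  rw [limsup_eq_iInf_iSup_of_nat, MeasurableSpace.measurableSet_iInf]
  intro n
  classical
  let g : (∀ i, X i) → ∀ i, X i := fun x i ↦ if i < n then z i else x i
  have hg : Measurable[⨆ i ≥ n, (mX i).comap fun x : ∀ j, X j ↦ x i] g := by
    refine @measurable_pi_lambda _ _ _ (_) _ _ fun i ↦ ?_
    by_cases hi : i < n
    · simp only [g, hi, if_true]
      exact measurable_const
    · simp only [g, hi, if_false]
      exact Measurable.of_comap_le (le_iSup₂_of_le i (not_lt.1 hi) le_rfl)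
  have hgA : g ⁻¹' A = A := by
    ext x
    have hgx : ∀ᶠ i in atTop, g x i = x i :=
      eventually_atTop.2 ⟨n, fun i hi ↦ if_neg (not_lt.2 hi)⟩
    exact ⟨hinv _ _ hgx, hinv _ _ (hgx.mono fun _ ↦ Eq.symm)⟩
  rw [← hgA]
  exact hg hA

theorem Measure.infinitePi_eq_zero_or_one_of_eventuallyEq_invariant
    (μ : ∀ i, Measure (X i)) [∀ i, IsProbabilityMeasure (μ i)] {A : Set (∀ i, X i)}
    (hA : MeasurableSet A)
    (hinv : ∀ x y : ∀ i, X i, (∀ᶠ i in atTop, x i = y i) → x ∈ A → y ∈ A) :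
    Measure.infinitePi μ A = 0 ∨ Measure.infinitePi μ A = 1 :=
  measure_zero_or_one_of_measurableSet_limsup_atTop
    (fun i ↦ (measurable_pi_apply i).comap_le)
    ((iIndepFun_iff_iIndep _ _ _).1 <|
      iIndepFun_infinitePi (X := fun _ ↦ id) fun _ ↦ measurable_id)
    (measurableSet_limsup_comap_eval_of_eventuallyEq_invariant hA hinv)

theorem Measure.nullSingletonClass_infinitePi [∀ i, MeasurableSingletonClass (X i)]
    (μ : ∀ i, Measure (X i)) [∀ i, IsProbabilityMeasure (μ i)] {c : ℝ≥0∞} (hc : c < 1)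
    (hμ : ∀ i (a : X i), μ i {a} ≤ c) :
    NullSingletonClass (Measure.infinitePi μ) := by
  refine ⟨fun x ↦ le_antisymm ?_ bot_le⟩
  refine ge_of_tendsto' (ENNReal.tendsto_pow_atTop_nhds_zero_of_lt_one hc) fun n ↦ ?_
  calc Measure.infinitePi μ {x}
      ≤ Measure.infinitePi μ ((Finset.range n : Set ℕ).pi fun i ↦ {x i}) :=
        measure_mono fun y hy i _ ↦ by rw [mem_singleton_iff.1 hy]; rfl
    _ = ∏ i ∈ Finset.range n, μ i {x i} :=
        Measure.infinitePi_pi _ fun i _ ↦ measurableSet_singleton _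
    _ ≤ c ^ n :=
        (Finset.prod_le_pow_card _ _ _ fun i _ ↦ hμ i (x i)).trans_eq (by rw [Finset.card_range])

theorem exists_ae_eq_const_of_measure_preimage_eq_zero_or_one {Ω Y : Type*}
    [MeasurableSpace Ω] [MeasurableSpace Y] [Nonempty Y] [MeasurableSpace.CountablySeparated Y]
    {μ : Measure Ω} [IsProbabilityMeasure μ] {f : Ω → Y} (hf : Measurable f)
    (h : ∀ U, MeasurableSet U → μ (f ⁻¹' U) = 0 ∨ μ (f ⁻¹' U) = 1) :
    ∃ c, f =ᵐ[μ] Function.const Ω c :=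
  exists_eventuallyEq_const_of_forall_separating MeasurableSet fun U hU ↦
    (h U hU).symm.imp (fun h1 ↦ ae_iff.2 ((prob_compl_eq_zero_iff (hf hU)).2 h1))
      measure_eq_zero_iff_ae_notMem.1

end MeasureTheory

theorem Set.countable_setOf_eventuallyEq {α : Type*} [Countable α] (x : ℕ → α) :
    {y : ℕ → α | ∀ᶠ i in atTop, y i = x i}.Countable := by
  have hcover : {y : ℕ → α | ∀ᶠ i in atTop, y i = x i} ⊆
      ⋃ n, range fun p : Fin n → α ↦ fun i ↦ if h : i < n then p ⟨i, h⟩ else x i := by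
    intro y hy
    obtain ⟨n, hn⟩ := eventually_atTop.1 hy
    refine mem_iUnion.2 ⟨n, fun i ↦ y i, funext fun i ↦ ?_⟩
    dsimp only
    split_ifs with h
    · rfl
    · exact (hn i (not_lt.1 h)).symm
  exact (countable_iUnion fun n ↦ countable_range _).mono hcover

noncomputable def unitInterval.half : I := ⟨2⁻¹, by norm_num, by norm_num⟩

theorem unitInterval.symm_half : σ half = half := by
  ext
  simp [half]
  norm_num

theorem unitInterval.coe_toNNReal_half : (toNNReal half : ℝ≥0∞) = 2⁻¹ := by
  have : toNNReal half = 2⁻¹ := by ext; simp [half]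
  rw [this, ENNReal.coe_inv two_ne_zero, ENNReal.coe_ofNat]

theorem ProbabilityTheory.bernoulliMeasure_half_singleton (b : Bool) :
    Ber(true, false, half) {b} = 2⁻¹ := by
  cases b
  · rw [bernoulliMeasure_apply_of_notMem_of_mem _ (measurableSet_singleton _) (by simp) rfl,
      symm_half, coe_toNNReal_half]
  · rw [bernoulliMeasure_apply_of_mem_of_notMem _ (measurableSet_singleton _) rfl (by simp),
      coe_toNNReal_half]

noncomputable def coinTossMeasure : Measure (ℕ → Bool) :=
  Measure.infinitePi fun _ ↦ Ber(true, false, half)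

instance : IsProbabilityMeasure coinTossMeasure := by
  unfold coinTossMeasure
  infer_instance

instance : NullSingletonClass coinTossMeasure :=
  Measure.nullSingletonClass_infinitePi _ ENNReal.one_half_lt_one
    fun _ b ↦ (bernoulliMeasure_half_singleton b).le

/-- `E_0` is not smooth: there is no Borel measurable `f : 2^ℕ → ℝ` with
`x E_0 y ↔ f x = f y`. -/
theorem E0_not_smooth :
    ¬ ∃ f : (ℕ → Bool) → ℝ, Measurable f ∧ ∀ x y, E0 x y ↔ f x = f y := by
  rintro ⟨f, hf, hE⟩
  have hfE : ∀ x y, (∀ᶠ i in atTop, x i = y i) ↔ f x = f y :=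
    fun x y ↦ eventually_atTop.trans (hE x y)
  obtain ⟨c, hc⟩ := exists_ae_eq_const_of_measure_preimage_eq_zero_or_one
    (μ := coinTossMeasure) hf fun U hU ↦
      Measure.infinitePi_eq_zero_or_one_of_eventuallyEq_invariant _ (hf hU)
        fun x y hxy hx ↦ by rwa [mem_preimage, ← (hfE x y).1 hxy]
  obtain ⟨x, hx⟩ := hc.exists
  have hclass_null := (countable_setOf_eventuallyEq x).measure_zero coinTossMeasure
  obtain ⟨y, hy, hyx⟩ := (hc.and (measure_eq_zero_iff_ae_notMem.1 hclass_null)).exists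
  exact hyx ((hfE y x).2 (hy.trans hx.symm))
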